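/- arXiv:2201.10696 — 5 statements merged into one kernel-verified Lean document; each statement's English description precedes it below -/
import Mathlib

section
/- Let D > 0, α > 0, c ∈ ℝ, let λ⁻ = (c − √(c² + 4·D·α))/(2·D), λ⁺ = (c + √(c² + 4·D·α))/(2·D) and ρ = √(c² + 4·D·α). Let h : ℝ → ℝ be bounded and continuous, and define (T h)(z) = (1/ρ)·(∫_{−∞}^{z} e^{λ⁻·(z−y)}·h(y) dy + ∫_{z}^{∞} e^{λ⁺·(z−y)}·h(y) dy). Then T h is twice continuously differentiable on ℝ, its first derivative is (T h)'(z) = (λ⁻/ρ)·∫_{−∞}^{z} e^{λ⁻·(z−y)}·h(y) dy + (λ⁺/ρ)·∫_{z}^{∞} e^{λ⁺·(z−y)}·h(y) dy, and for all z ∈ ℝ one has −D·(T h)''(z) + c·(T h)'(z) + α·(T h)(z) = h(z). -/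
open MeasureTheory Set

lemma aux_ici {b Cb : ℝ} (hb : 0 < b) {g : ℝ → ℝ} (hg : Continuous g)
    (hCb : ∀ y, |g y| ≤ Cb) (z : ℝ) :
    IntegrableOn (fun y => Real.exp (-b * y) * g y) (Ici z) := by
  have hexp : IntegrableOn (fun y => Real.exp (-b * y)) (Ici z) :=
    Iff.mpr integrableOn_Ici_iff_integrableOn_Ioi (exp_neg_integrableOn_Ioi z hb)
  refine Integrable.mono' (hexp.const_mul Cb) ?_ ?_
  · exact ((Real.continuous_exp.comp (continuous_const.mul continuous_id)).mul hg).aestronglyMeasurable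
  · filter_upwards with y
    rw [Real.norm_eq_abs, abs_mul, abs_of_nonneg (Real.exp_pos _).le, mul_comm Cb]
    exact mul_le_mul_of_nonneg_left (hCb y) (Real.exp_pos _).le

lemma aux_iic {a Cb : ℝ} (ha : 0 < a) {g : ℝ → ℝ} (hg : Continuous g)
    (hCb : ∀ y, |g y| ≤ Cb) (z : ℝ) :
    IntegrableOn (fun y => Real.exp (a * y) * g y) (Iic z) := by
  rw [← (Measure.measurePreserving_neg (volume : Measure ℝ)).integrableOn_comp_preimage
      (Homeomorph.neg ℝ).measurableEmbedding]
  simp only [Function.comp_def, neg_preimage, neg_Iic]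
  have := aux_ici ha (g := fun y => g (-y)) (hg.comp continuous_neg)
    (fun y => hCb (-y)) (-z)
  simpa [mul_comm, mul_neg, neg_mul] using this

lemma aux_Ici_sub (f : ℝ → ℝ) {a b : ℝ} (ha : IntegrableOn f (Ici a)) (hb : IntegrableOn f (Ici b)) :
    (∫ x in Ici a, f x) - ∫ x in Ici b, f x = ∫ x in a..b, f x := by
  wlog hab : a ≤ b generalizing a b
  · rw [← neg_sub, this hb ha (le_of_not_ge hab), intervalIntegral.integral_symm, neg_neg]
  have hsplit : Ici a = Ico a b ∪ Ici b := (Ico_union_Ici_eq_Ici hab).symm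
  rw [hsplit, setIntegral_union (Set.disjoint_left.mpr fun x hx hx' => hx.2.not_ge hx')
      measurableSet_Ici (ha.mono_set Ico_subset_Ici_self) hb,
    add_sub_cancel_right, integral_Ico_eq_integral_Ioo,
    intervalIntegral.integral_of_le hab, integral_Ioc_eq_integral_Ioo]

/-- The integral operator `T = Δ^{-1}` built from the Green's kernel of
`Δ(u) = −D·u'' + c·u' + α·u` inverts `Δ` on bounded continuous functions. -/
theorem inverse_integral_operator_second_order
    (D α c : ℝ) (hD : 0 < D) (hα : 0 < α)
    (lm lp ρ : ℝ)
    (hlm : lm = (c - Real.sqrt (c ^ 2 + 4 * D * α)) / (2 * D))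
    (hlp : lp = (c + Real.sqrt (c ^ 2 + 4 * D * α)) / (2 * D))
    (hρ : ρ = Real.sqrt (c ^ 2 + 4 * D * α))
    (h : ℝ → ℝ) (hcont : Continuous h) (hbdd : ∃ Cb, ∀ y, |h y| ≤ Cb)
    (T : ℝ → ℝ)
    (hT : ∀ z, T z = (1 / ρ) *
        ((∫ y in Set.Iic z, Real.exp (lm * (z - y)) * h y) +
          ∫ y in Set.Ici z, Real.exp (lp * (z - y)) * h y)) :
    ContDiff ℝ 2 T ∧
    (∀ z, deriv T z =
        (lm / ρ) * (∫ y in Set.Iic z, Real.exp (lm * (z - y)) * h y) +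
        (lp / ρ) * ∫ y in Set.Ici z, Real.exp (lp * (z - y)) * h y) ∧
    (∀ z, - D * deriv (deriv T) z + c * deriv T z + α * T z = h z) := by
  obtain ⟨Cb, hCb⟩ := hbdd
  set s : ℝ := Real.sqrt (c ^ 2 + 4 * D * α) with hs
  have hs2 : s ^ 2 = c ^ 2 + 4 * D * α := Real.sq_sqrt (by positivity)
  have hspos : 0 < s := Real.sqrt_pos.mpr (by positivity)
  have hρpos : 0 < ρ := hρ ▸ hspos
  have hρ0 : ρ ≠ 0 := hρpos.ne'
  have hcs : c < s := by nlinarith [sq_nonneg (s + c), sq_nonneg (s - c)]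
  have hcs' : -s < c := by nlinarith [sq_nonneg (s + c), sq_nonneg (s - c)]
  have hlmneg : lm < 0 := by
    rw [hlm]; apply div_neg_of_neg_of_pos <;> [skip; skip] <;> linarith
  have hlppos : 0 < lp := by
    rw [hlp]; apply div_pos <;> linarith
  -- the auxiliary primitives
  set f1 : ℝ → ℝ := fun y => Real.exp (-lm * y) * h y with hf1
  set f2 : ℝ → ℝ := fun y => Real.exp (-lp * y) * h y with hf2
  have hf1c : Continuous f1 :=
    (Real.continuous_exp.comp (continuous_const.mul continuous_id)).mul hcont
  have hf2c : Continuous f2 :=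
    (Real.continuous_exp.comp (continuous_const.mul continuous_id)).mul hcont
  set G : ℝ → ℝ := fun z => ∫ y in Iic z, f1 y with hG
  set K : ℝ → ℝ := fun z => ∫ y in Ici z, f2 y with hK
  have hGint : ∀ z, IntegrableOn f1 (Iic z) := fun z =>
    aux_iic (a := -lm) (by linarith) hcont hCb z
  have hKint : ∀ z, IntegrableOn f2 (Ici z) := fun z =>
    aux_ici (b := lp) hlppos hcont hCb z
  set F : ℝ → ℝ := fun z => Real.exp (lm * z) * G z with hF
  set H : ℝ → ℝ := fun z => Real.exp (lp * z) * K z with hH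
  have hFeq : ∀ z, (∫ y in Iic z, Real.exp (lm * (z - y)) * h y) = F z := by
    intro z
    have key : ∀ y : ℝ, Real.exp (lm * (z - y)) * h y
        = Real.exp (lm * z) * (Real.exp (-lm * y) * h y) := fun y => by
      rw [← mul_assoc, ← Real.exp_add]; ring_nf
    simp_rw [key]
    rw [integral_const_mul]
  have hHeq : ∀ z, (∫ y in Ici z, Real.exp (lp * (z - y)) * h y) = H z := by
    intro z
    have key : ∀ y : ℝ, Real.exp (lp * (z - y)) * h y
        = Real.exp (lp * z) * (Real.exp (-lp * y) * h y) := fun y => by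
      rw [← mul_assoc, ← Real.exp_add]; ring_nf
    simp_rw [key]
    rw [integral_const_mul]
  have hTFH : ∀ z, T z = (1 / ρ) * (F z + H z) := fun z => by
    rw [hT z, hFeq z, hHeq z]
  -- derivatives of G and K
  have hG' : ∀ z, HasDerivAt G (f1 z) z := by
    intro z
    have hGrepr : G = fun u => G 0 + ∫ x in (0:ℝ)..u, f1 x := by
      funext u
      have := intervalIntegral.integral_Iic_sub_Iic (hGint 0) (hGint u)
      simp only [hG]; linarith
    rw [hGrepr]
    exact (intervalIntegral.integral_hasDerivAt_right (hf1c.intervalIntegrable 0 z)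
      (hf1c.stronglyMeasurableAtFilter _ _) hf1c.continuousAt).const_add (G 0)
  have hK' : ∀ z, HasDerivAt K (-(f2 z)) z := by
    intro z
    have hKrepr : K = fun u => K 0 - ∫ x in (0:ℝ)..u, f2 x := by
      funext u
      have := aux_Ici_sub f2 (hKint 0) (hKint u)
      simp only [hK]; linarith
    rw [hKrepr]
    exact (intervalIntegral.integral_hasDerivAt_right (hf2c.intervalIntegrable 0 z)
      (hf2c.stronglyMeasurableAtFilter _ _) hf2c.continuousAt).const_sub (K 0)
  -- derivatives of F and H
  have hexp1 : ∀ z, Real.exp (lm * z) * Real.exp (-lm * z) = 1 := fun z => by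
    rw [← Real.exp_add]; ring_nf; exact Real.exp_zero
  have hexp2 : ∀ z, Real.exp (lp * z) * Real.exp (-lp * z) = 1 := fun z => by
    rw [← Real.exp_add]; ring_nf; exact Real.exp_zero
  have hF' : ∀ z, HasDerivAt F (lm * F z + h z) z := by
    intro z
    have he : HasDerivAt (fun z => Real.exp (lm * z)) (Real.exp (lm * z) * lm) z := by
      simpa using ((hasDerivAt_id z).const_mul lm).exp
    have := he.mul (hG' z)
    refine this.congr_deriv (Eq.symm ?_)
    simp only [hF, hf1]
    linear_combination (-(h z)) * hexp1 z
  have hH' : ∀ z, HasDerivAt H (lp * H z - h z) z := by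
    intro z
    have he : HasDerivAt (fun z => Real.exp (lp * z)) (Real.exp (lp * z) * lp) z := by
      simpa using ((hasDerivAt_id z).const_mul lp).exp
    have := he.mul (hK' z)
    refine this.congr_deriv (Eq.symm ?_)
    simp only [hH, hf2]
    linear_combination (h z) * hexp2 z
  -- derivative of T
  have hT' : ∀ z, HasDerivAt T ((lm / ρ) * F z + (lp / ρ) * H z) z := by
    intro z
    have hTfun : T = fun z => (1 / ρ) * (F z + H z) := funext hTFH
    rw [hTfun]
    have := ((hF' z).add (hH' z)).const_mul (1 / ρ)
    refine this.congr_deriv (Eq.symm ?_)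
    ring
  have hderivT : deriv T = fun z => (lm / ρ) * F z + (lp / ρ) * H z :=
    funext fun z => (hT' z).deriv
  have hT'' : ∀ z, HasDerivAt (deriv T)
      ((lm / ρ) * (lm * F z + h z) + (lp / ρ) * (lp * H z - h z)) z := by
    intro z
    rw [hderivT]
    exact ((hF' z).const_mul _).add ((hH' z).const_mul _)
  have hderivT2 : ∀ z, deriv (deriv T) z
      = (lm / ρ) * (lm * F z + h z) + (lp / ρ) * (lp * H z - h z) :=
    fun z => (hT'' z).deriv
  -- root identities
  have hA : D * lm ^ 2 - c * lm - α = 0 := by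
    rw [hlm]; field_simp; nlinarith [hs2]
  have hB : D * lp ^ 2 - c * lp - α = 0 := by
    rw [hlp]; field_simp; nlinarith [hs2]
  have hC : D * (lp - lm) = ρ := by
    rw [hlp, hlm, hρ]; field_simp; ring
  refine ⟨?_, ?_, ?_⟩
  · -- ContDiff ℝ 2 T
    rw [show (2 : WithTop ℕ∞) = 1 + 1 from rfl, contDiff_succ_iff_deriv]
    refine ⟨fun z => (hT' z).differentiableAt, by simp, ?_⟩
    rw [contDiff_one_iff_deriv]
    refine ⟨fun z => (hT'' z).differentiableAt, ?_⟩
    have : deriv (deriv T)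
        = fun z => (lm / ρ) * (lm * F z + h z) + (lp / ρ) * (lp * H z - h z) :=
      funext hderivT2
    rw [this]
    have hFc : Continuous F :=
      Differentiable.continuous (fun z => (hF' z).differentiableAt)
    have hHc : Continuous H :=
      Differentiable.continuous (fun z => (hH' z).differentiableAt)
    exact (continuous_const.mul ((continuous_const.mul hFc).add hcont)).add
      (continuous_const.mul ((continuous_const.mul hHc).sub hcont))
  · intro z
    rw [(hT' z).deriv, hFeq z, hHeq z]
  · intro z
    rw [hderivT2 z, (hT' z).deriv, hTFH z]
    have hu : ρ * ρ⁻¹ = 1 := mul_inv_cancel₀ hρ0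
    linear_combination (-(ρ⁻¹ * F z)) * hA + (-(ρ⁻¹ * H z)) * hB + (ρ⁻¹ * h z) * hC
      + (h z) * hu
end

section
/- Let c > 0, α_S > 0, let B : ℝ → ℝ be continuous, bounded and nonnegative, and let S : ℝ → ℝ be continuous and bounded. Suppose that for all z ∈ ℝ, S(z) = (1/c)·∫_{−∞}^{z} e^{−(α_S/c)·(z−y)}·(α_S·S(y) − f(B(y))·S(y)) dy. Then S is differentiable on ℝ and satisfies c·S'(z) = −f(B(z))·S(z) for all z ∈ ℝ. -/
open MeasureTheory

/-- The Hill function `M * (x/A)^n / (1 + (x/A)^n)` with real exponent `n`. -/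
noncomputable def hill (M A n x : ℝ) : ℝ :=
  M * (x / A) ^ n / (1 + (x / A) ^ n)

/-- A fixed point of the integral map for the `S`-component solves the
travelling wave equation `c·S' = −f(B)·S`. -/
theorem fixed_point_solves_S_equation
    (c αS M₁ A₁ n₁ : ℝ) (hc : 0 < c) (hαS : 0 < αS)
    (hM₁ : 0 < M₁) (hA₁ : 0 < A₁) (hn₁ : 1 ≤ n₁)
    (B S : ℝ → ℝ)
    (hBcont : Continuous B) (hBbdd : ∃ Cb, ∀ z, |B z| ≤ Cb)
    (hBpos : ∀ z, 0 ≤ B z)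
    (hScont : Continuous S) (hSbdd : ∃ Cs, ∀ z, |S z| ≤ Cs)
    (hfix : ∀ z, S z = (1 / c) * ∫ y in Set.Iic z,
        Real.exp (-(αS / c) * (z - y)) *
          (αS * S y - hill M₁ A₁ n₁ (B y) * S y)) :
    Differentiable ℝ S ∧
    ∀ z, c * deriv S z = - hill M₁ A₁ n₁ (B z) * S z := by
  obtain ⟨Cs, hCs⟩ := hSbdd
  set k : ℝ := αS / c with hkdef
  have hk : 0 < k := div_pos hαS hc
  set h : ℝ → ℝ := fun y => αS * S y - hill M₁ A₁ n₁ (B y) * S y with hhdef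
  -- continuity of the Hill term
  have hden : ∀ y, (0:ℝ) < 1 + (B y / A₁) ^ n₁ := by
    intro y
    have : (0:ℝ) ≤ (B y / A₁) ^ n₁ :=
      Real.rpow_nonneg (div_nonneg (hBpos y) hA₁.le) _
    linarith
  have hpow_cont : Continuous fun y => (B y / A₁) ^ n₁ := by
    rw [continuous_iff_continuousAt]
    intro y
    exact ((hBcont.div_const A₁).continuousAt).rpow_const (Or.inr (by linarith))
  have hill_cont : Continuous fun y => hill M₁ A₁ n₁ (B y) := by
    unfold hill
    exact ((continuous_const.mul hpow_cont).div
      (continuous_const.add hpow_cont) fun y => (hden y).ne')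
  have hhcont : Continuous h :=
    (continuous_const.mul hScont).sub (hill_cont.mul hScont)
  -- bound on the Hill term
  have hill_bdd : ∀ y, |hill M₁ A₁ n₁ (B y)| ≤ M₁ := by
    intro y
    have h0 : (0:ℝ) ≤ (B y / A₁) ^ n₁ :=
      Real.rpow_nonneg (div_nonneg (hBpos y) hA₁.le) _
    rw [abs_le]
    constructor
    · have : (0:ℝ) ≤ hill M₁ A₁ n₁ (B y) := by
        unfold hill
        positivity
      linarith
    · unfold hill
      rw [div_le_iff₀ (hden y)]
      nlinarith
  have hCs0 : 0 ≤ Cs := (abs_nonneg _).trans (hCs 0)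
  have hhbdd : ∀ y, |h y| ≤ (αS + M₁) * Cs := by
    intro y
    have h1 : |αS * S y| ≤ αS * Cs := by
      rw [abs_mul, abs_of_pos hαS]
      exact mul_le_mul_of_nonneg_left (hCs y) hαS.le
    have h2 : |hill M₁ A₁ n₁ (B y) * S y| ≤ M₁ * Cs := by
      rw [abs_mul]
      exact mul_le_mul (hill_bdd y) (hCs y) (abs_nonneg _) hM₁.le
    calc |h y| ≤ |αS * S y| + |hill M₁ A₁ n₁ (B y) * S y| := abs_sub _ _
      _ ≤ αS * Cs + M₁ * Cs := add_le_add h1 h2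
      _ = (αS + M₁) * Cs := by ring
  set φ : ℝ → ℝ := fun y => Real.exp (k * y) * h y with hφdef
  have hφcont : Continuous φ := (Real.continuous_exp.comp (continuous_const.mul continuous_id)).mul hhcont
  -- integrability of `exp (k*y)` on `Iic z`
  have hexp_int : ∀ z : ℝ, IntegrableOn (fun y => Real.exp (k * y)) (Set.Iic z) := by
    intro z
    rw [← Measure.map_neg_eq_self (volume : Measure ℝ)]
    have m : MeasurableEmbedding fun x : ℝ => -x := (Homeomorph.neg ℝ).measurableEmbedding
    rw [m.integrableOn_map_iff]
    have := exp_neg_integrableOn_Ioi (-z) hk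
    simp only [Function.comp_def, Set.neg_preimage, Set.neg_Iic]
    have heq : (fun x : ℝ => Real.exp (k * -x)) = fun x : ℝ => Real.exp (-k * x) := by
      funext x; ring_nf
    rw [heq]
    exact Iff.mpr integrableOn_Ici_iff_integrableOn_Ioi this
  have hφint : ∀ z : ℝ, IntegrableOn φ (Set.Iic z) := by
    intro z
    refine Integrable.mono (((hexp_int z).const_mul ((αS + M₁) * Cs)))
      (hφcont.aestronglyMeasurable.restrict) ?_
    filter_upwards with y
    rw [Real.norm_eq_abs, Real.norm_eq_abs, abs_mul, abs_mul,
      abs_of_pos (Real.exp_pos _), abs_of_nonneg (le_trans (abs_nonneg _) (hhbdd 0))]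
    rw [mul_comm ((αS + M₁) * Cs)]
    exact mul_le_mul_of_nonneg_left (hhbdd y) (Real.exp_pos _).le
  set G : ℝ → ℝ := fun z => ∫ y in Set.Iic z, φ y with hGdef
  -- rewrite the fixed point equation
  have hSG : ∀ z, S z = (1 / c) * (Real.exp (-(k * z)) * G z) := by
    intro z
    rw [hfix z]
    congr 1
    rw [hGdef, ← integral_const_mul]
    refine setIntegral_congr_fun measurableSet_Iic fun y _ => ?_
    simp only [hφdef]
    rw [← mul_assoc, ← Real.exp_add]
    ring_nf
    simp only [hhdef]
    ring
  -- derivative of G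
  have hGderiv : ∀ z, HasDerivAt G (φ z) z := by
    intro z₀
    set a := z₀ - 1 with hadef
    have hloc : ∀ z ∈ Set.Ioi a, G z = G a + ∫ t in a..z, φ t := by
      intro z hz
      have hz' : a ≤ z := le_of_lt hz
      rw [intervalIntegral.integral_of_le hz', hGdef]
      rw [← setIntegral_union (Set.Iic_disjoint_Ioc le_rfl) measurableSet_Ioc
        (hφint a) ((hφint z).mono_set Set.Ioc_subset_Iic_self)]
      rw [Set.Iic_union_Ioc_eq_Iic hz']
    have hmem : Set.Ioi a ∈ nhds z₀ := Ioi_mem_nhds (by simp [hadef])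
    have hD : HasDerivAt (fun z => G a + ∫ t in a..z, φ t) (φ z₀) z₀ := by
      refine HasDerivAt.const_add _ ?_
      exact intervalIntegral.integral_hasDerivAt_right
        (hφcont.intervalIntegrable a z₀)
        (hφcont.stronglyMeasurableAtFilter _ _)
        hφcont.continuousAt
    refine hD.congr_of_eventuallyEq ?_
    filter_upwards [hmem] with z hz using hloc z hz
  -- derivative of S
  have hSderiv : ∀ z, HasDerivAt S ((1 / c) * (Real.exp (-(k * z)) * (-k) * G z
      + Real.exp (-(k * z)) * φ z)) z := by
    intro z₀
    have hE : HasDerivAt (fun z => Real.exp (-(k * z))) (Real.exp (-(k * z₀)) * (-k)) z₀ := by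
      have h1 : HasDerivAt (fun z : ℝ => -(k * z)) (-k) z₀ := by
        simpa using ((hasDerivAt_id z₀).const_mul k).fun_neg
      exact h1.exp
    have := ((hE.mul (hGderiv z₀)).const_mul (1 / c))
    have hfun : S = fun z => (1 / c) * (Real.exp (-(k * z)) * G z) := funext hSG
    rw [hfun]
    exact this
  constructor
  · exact fun z => (hSderiv z).differentiableAt
  · intro z
    rw [(hSderiv z).deriv]
    have hEG : Real.exp (-(k * z)) * G z = c * S z := by
      rw [hSG z]; field_simp
    have hexp : Real.exp (-(k * z)) * φ z = h z := by
      simp only [hφdef]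
      rw [← mul_assoc, ← Real.exp_add]
      ring_nf
      simp
    have hkc : k * c = αS := by
      rw [hkdef]; field_simp
    have : c * ((1 / c) * (Real.exp (-(k * z)) * (-k) * G z
        + Real.exp (-(k * z)) * φ z))
        = -k * (Real.exp (-(k * z)) * G z) + Real.exp (-(k * z)) * φ z := by
      field_simp
    rw [this, hEG, hexp, hhdef]
    simp only
    linear_combination (-S z) * hkc
end

section
/- Let M₁, M₂, A₁, A₂, α, γ, N > 0 and let n₂ ≥ 1 be real with n₁ = n₂ + 1. Assume α^{n₁}·M₁·N·(A₂^{n₂} + N^{n₂}) ≤ A₁^{n₁}·M₂·γ^{n₁}. Then for every B ≥ 0 with (γ/α)·B ≤ N, one has M₁·((B/A₁)^{n₁}/(1 + (B/A₁)^{n₁}))·N ≤ M₂·((((γ/α)·B)/A₂)^{n₂}/(1 + (((γ/α)·B)/A₂)^{n₂}))·(γ/α)·B, i.e. f(B)·N ≤ g((γ/α)·B)·(γ/α)·B. -/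
/-- The core Hill-function estimate `f(B)·N ≤ g((γ/α)·B)·(γ/α)·B` verifying
that `(B_U, (γ/α)·B_U)` gives an upper solution for the infected compartment. -/
theorem hill_upper_solution_inequality
    (M₁ M₂ A₁ A₂ α γ N n₁ n₂ : ℝ)
    (hM₁ : 0 < M₁) (hM₂ : 0 < M₂) (hA₁ : 0 < A₁) (hA₂ : 0 < A₂)
    (hα : 0 < α) (hγ : 0 < γ) (hN : 0 < N)
    (hn₂ : 1 ≤ n₂) (hn : n₁ = n₂ + 1)
    (hineq : α ^ n₁ * M₁ * N * (A₂ ^ n₂ + N ^ n₂) ≤ A₁ ^ n₁ * M₂ * γ ^ n₁) :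
    ∀ B : ℝ, 0 ≤ B → γ / α * B ≤ N →
      M₁ * ((B / A₁) ^ n₁ / (1 + (B / A₁) ^ n₁)) * N ≤
        M₂ * (((γ / α * B) / A₂) ^ n₂ / (1 + ((γ / α * B) / A₂) ^ n₂)) *
          (γ / α * B) := by
  intro B hB hBN
  have hn₁pos : (0:ℝ) < n₁ := by rw [hn]; linarith
  rcases eq_or_lt_of_le hB with hB0 | hB0
  · rw [← hB0]
    simp [Real.zero_rpow hn₁pos.ne', Real.zero_rpow (by linarith : n₂ ≠ 0)]
  set I : ℝ := γ / α * B with hIdef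
  have hI : 0 < I := by positivity
  have hIN : I ≤ N := hBN
  have hA₂n : (0:ℝ) < A₂ ^ n₂ := Real.rpow_pos_of_pos hA₂ n₂
  have hA₁n : (0:ℝ) < A₁ ^ n₁ := Real.rpow_pos_of_pos hA₁ n₁
  have hαn : (0:ℝ) < α ^ n₁ := Real.rpow_pos_of_pos hα n₁
  have hIn₂ : (0:ℝ) < I ^ n₂ := Real.rpow_pos_of_pos hI n₂
  have hNn₂ : (0:ℝ) < N ^ n₂ := Real.rpow_pos_of_pos hN n₂
  -- rewrite the RHS exactly
  have hq : (I / A₂) ^ n₂ = I ^ n₂ / A₂ ^ n₂ := Real.div_rpow hI.le hA₂.le n₂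
  have key : M₂ * ((I / A₂) ^ n₂ / (1 + (I / A₂) ^ n₂)) * I
      = M₂ * I ^ n₁ / (A₂ ^ n₂ + I ^ n₂) := by
    rw [hq, hn, Real.rpow_add hI, Real.rpow_one]
    field_simp
  rw [key]
  -- lower bound on the RHS using I ≤ N in the denominator
  have hden : A₂ ^ n₂ + I ^ n₂ ≤ A₂ ^ n₂ + N ^ n₂ := by
    have := Real.rpow_le_rpow hI.le hIN (by linarith : (0:ℝ) ≤ n₂)
    linarith
  have hrhs : M₂ * I ^ n₁ / (A₂ ^ n₂ + N ^ n₂) ≤ M₂ * I ^ n₁ / (A₂ ^ n₂ + I ^ n₂) :=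
    div_le_div_of_nonneg_left (by positivity) (by positivity) hden
  -- upper bound on the LHS: drop the denominator
  have hp : (0:ℝ) ≤ (B / A₁) ^ n₁ := Real.rpow_nonneg (by positivity) n₁
  have hlhs : M₁ * ((B / A₁) ^ n₁ / (1 + (B / A₁) ^ n₁)) * N ≤ M₁ * (B / A₁) ^ n₁ * N := by
    have : (B / A₁) ^ n₁ / (1 + (B / A₁) ^ n₁) ≤ (B / A₁) ^ n₁ :=
      div_le_self hp (by linarith)
    have := mul_le_mul_of_nonneg_left this hM₁.le
    nlinarith
  -- the middle inequality from the parameter constraint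
  have hpB : (B / A₁) ^ n₁ = B ^ n₁ / A₁ ^ n₁ := Real.div_rpow hB (le_of_lt hA₁) n₁
  have hIB : I ^ n₁ = γ ^ n₁ / α ^ n₁ * B ^ n₁ := by
    rw [hIdef, Real.mul_rpow (by positivity) hB, Real.div_rpow hγ.le hα.le]
  have hBn : (0:ℝ) ≤ B ^ n₁ := Real.rpow_nonneg hB n₁
  have hmid : M₁ * (B / A₁) ^ n₁ * N ≤ M₂ * I ^ n₁ / (A₂ ^ n₂ + N ^ n₂) := by
    rw [hpB, hIB]
    have e1 : M₁ * (B ^ n₁ / A₁ ^ n₁) * N = M₁ * B ^ n₁ * N / A₁ ^ n₁ := by ring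
    have e2 : M₂ * (γ ^ n₁ / α ^ n₁ * B ^ n₁) / (A₂ ^ n₂ + N ^ n₂)
        = M₂ * γ ^ n₁ * B ^ n₁ / (α ^ n₁ * (A₂ ^ n₂ + N ^ n₂)) := by
      field_simp
    rw [e1, e2, div_le_div_iff₀ (by positivity) (by positivity)]
    have h := mul_le_mul_of_nonneg_right hineq hBn
    nlinarith [mul_pos hA₁n hαn]
  linarith
end

section
/- Let D₁ > 0, 0 ≤ D₂ ≤ D₁, c ∈ ℝ, a > 0 and M > 0, and let B : ℝ → ℝ be twice differentiable, monotonically increasing, with 0 ≤ B(z) ≤ M for all z, and satisfying D₁·B''(z) − c·B'(z) + a·B(z)·(1 − B(z)/M) = 0 for all z ∈ ℝ. Then D₂·B''(z) − c·B'(z) ≤ 0 for all z ∈ ℝ. -/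
/-- For a monotone bounded Fisher–KPP wave `B` with diffusion `D₁`, the
estimate `D₂·B'' − c·B' ≤ 0` holds for any `0 ≤ D₂ ≤ D₁`. -/
theorem ooze_upper_solution_estimate
    (D₁ D₂ c a M : ℝ) (hD₁ : 0 < D₁) (hD₂0 : 0 ≤ D₂) (hDD : D₂ ≤ D₁)
    (ha : 0 < a) (hM : 0 < M)
    (B : ℝ → ℝ)
    (h1 : Differentiable ℝ B) (h2 : Differentiable ℝ (deriv B))
    (hmono : Monotone B)
    (hbound : ∀ z, 0 ≤ B z ∧ B z ≤ M)
    (hwave : ∀ z, D₁ * deriv (deriv B) z - c * deriv B z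
        + a * B z * (1 - B z / M) = 0) :
    ∀ z, D₂ * deriv (deriv B) z - c * deriv B z ≤ 0 := by
  -- the reaction term is nonnegative
  have hq : ∀ x, 0 ≤ a * B x * (1 - B x / M) := by
    intro x
    obtain ⟨hb0, hb1⟩ := hbound x
    have h1M : 0 ≤ 1 - B x / M := by
      rw [sub_nonneg, div_le_one hM]; exact hb1
    positivity
  -- the first derivative is nonnegative
  have hB' : ∀ x, 0 ≤ deriv B x := by
    intro x
    have hd := (h1 x).hasDerivAt
    rw [hasDerivAt_iff_tendsto_slope] at hd
    refine ge_of_tendsto hd ?_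
    filter_upwards [self_mem_nhdsWithin] with y hy
    rw [slope_def_field, div_eq_mul_inv]
    rcases lt_or_gt_of_ne (Set.mem_compl_singleton_iff.mp hy) with h | h
    · have hb : B y ≤ B x := hmono h.le
      have hyx : y - x < 0 := by linarith
      exact mul_nonneg_of_nonpos_of_nonpos (by linarith) (inv_nonpos.mpr hyx.le)
    · have hb : B x ≤ B y := hmono h.le
      have hyx : 0 < y - x := by linarith
      exact mul_nonneg (by linarith) (inv_nonneg.mpr hyx.le)
  intro z
  rcases le_or_gt 0 c with hc | hc
  · -- case c ≥ 0
    have hw := hwave z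
    have h1' := hq z
    have h2' := hB' z
    nlinarith [mul_nonneg (mul_nonneg (sub_nonneg.2 hDD) hc) h2',
      mul_nonneg hD₂0 h1', mul_nonneg hc h2']
  · -- case c < 0 : the derivative vanishes identically
    have hz0 : ∀ x, deriv B x = 0 := by
      intro x₀
      by_contra hne
      have hε : 0 < deriv B x₀ := lt_of_le_of_ne (hB' x₀) (Ne.symm hne)
      set ε := deriv B x₀ with hεdef
      -- h := D₁ B' − c B is antitone
      set h : ℝ → ℝ := fun y => D₁ * deriv B y - c * B y with hhdef
      have hdiff : Differentiable ℝ h := by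
        exact (h2.const_mul D₁).sub (h1.const_mul c)
      have hanti : Antitone h := by
        apply antitone_of_deriv_nonpos hdiff
        intro y
        have : deriv h y = D₁ * deriv (deriv B) y - c * deriv B y := by
          rw [hhdef]
          rw [deriv_fun_sub ((h2 y).const_mul D₁) ((h1 y).const_mul c),
            deriv_const_mul D₁ (h2 y), deriv_const_mul c (h1 y)]
        rw [this]
        have := hwave y
        have := hq y
        linarith
      -- hence B' ≥ ε on (-∞, x₀]
      have hlb : ∀ y ≤ x₀, ε ≤ deriv B y := by
        intro y hy
        have hhle : h x₀ ≤ h y := hanti hy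
        have hBle : B y ≤ B x₀ := hmono hy
        have : 0 ≤ c * (B y - B x₀) := mul_nonneg_of_nonpos_of_nonpos hc.le (by linarith)
        simp only [hhdef] at hhle
        nlinarith
      -- then B grows at rate ε on (-∞, x₀], contradicting boundedness
      set g : ℝ → ℝ := fun y => B y - ε * y with hgdef
      have hg' : ∀ y, HasDerivAt g (deriv B y - ε) y := by
        intro y
        have := (h1 y).hasDerivAt.fun_sub ((hasDerivAt_id y).const_mul ε)
        simpa [hgdef, mul_comm] using this
      have hgm : MonotoneOn g (Set.Iic x₀) := by
        apply monotoneOn_of_deriv_nonneg (convex_Iic x₀)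
        · exact (Differentiable.continuous (fun y => (hg' y).differentiableAt)).continuousOn
        · exact fun y _ => ((hg' y).differentiableAt).differentiableWithinAt
        · intro y hy
          rw [interior_Iic] at hy
          rw [(hg' y).deriv]
          have := hlb y (le_of_lt hy)
          linarith
      set T : ℝ := (M + 1) / ε with hT
      have hTpos : 0 < T := div_pos (by linarith [hM]) hε
      have hyle : x₀ - T ≤ x₀ := by linarith
      have := hgm (Set.mem_Iic.mpr hyle) (Set.mem_Iic.mpr le_rfl) hyle
      simp only [hgdef] at this
      have hεT : ε * T = M + 1 := by
        rw [hT]; field_simp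
      obtain ⟨hb0, _⟩ := hbound (x₀ - T)
      obtain ⟨_, hb1⟩ := hbound x₀
      nlinarith
    have hd0 : deriv B = fun _ => 0 := funext hz0
    have hdd0 : deriv (deriv B) z = 0 := by
      rw [hd0]; simp
    rw [hdd0, hz0 z]
    ring_nf
    simp
end

section
/- Let c > 0, D₂ > 0, α > 0, γ > 0 and μ ≥ 0. Let O : ℝ → ℝ be twice differentiable with O(z) ≥ 0 for all z and with O' bounded, and let I, S : ℝ → ℝ be continuous with I(z) ≥ 0 and S(z) ≥ 0 for all z and S bounded. Suppose c·O'(z) − D₂·O''(z) = α·I(z) − μ·O(z)·S(z) − γ·O(z) for all z ∈ ℝ, that I(z) → 0 as z → +∞, and that O(z) → b as z → +∞ for some b ∈ ℝ. Then b = 0. -/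
open Filter

/-- The boundary condition `O(+∞) = 0` for travelling waves of the ooze
equation: if `O` converges at `+∞`, the only possible limit is `0`. -/
theorem ooze_limit_is_zero
    (c D₂ α γ μ : ℝ) (hc : 0 < c) (hD₂ : 0 < D₂) (hα : 0 < α) (hγ : 0 < γ)
    (hμ : 0 ≤ μ)
    (O I S : ℝ → ℝ)
    (hO1 : Differentiable ℝ O) (hO2 : Differentiable ℝ (deriv O))
    (hOpos : ∀ z, 0 ≤ O z)
    (hO'bdd : ∃ Cb, ∀ z, |deriv O z| ≤ Cb)
    (hIcont : Continuous I) (hScont : Continuous S)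
    (hIpos : ∀ z, 0 ≤ I z) (hSpos : ∀ z, 0 ≤ S z)
    (hSbdd : ∃ Cs, ∀ z, |S z| ≤ Cs)
    (heq : ∀ z, c * deriv O z - D₂ * deriv (deriv O) z =
        α * I z - μ * O z * S z - γ * O z)
    (hI0 : Tendsto I atTop (nhds 0))
    (b : ℝ) (hOb : Tendsto O atTop (nhds b)) :
    b = 0 := by
  by_contra hb
  have hb0 : 0 ≤ b := ge_of_tendsto' hOb hOpos
  have hbpos : 0 < b := lt_of_le_of_ne hb0 (Ne.symm hb)
  obtain ⟨Cb, hCb⟩ := hO'bdd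
  set k := c / D₂ with hk_def
  have hk : 0 < k := div_pos hc hD₂
  have hkD : k * D₂ = c := div_mul_cancel₀ c hD₂.ne'
  set δ := γ * b / 4 with hδ_def
  have hδ : 0 < δ := by positivity
  -- Eventually the right-hand side of the ODE is ≤ -δ
  have h1 : ∀ᶠ z in atTop, I z < δ / α := hI0.eventually_lt_const (by positivity)
  have h2 : ∀ᶠ z in atTop, b / 2 < O z := hOb.eventually_const_lt (by linarith)
  obtain ⟨N, hN⟩ := eventually_atTop.1 (h1.and h2)
  -- key differential inequality
  have key : ∀ z, N ≤ z → δ / D₂ ≤ deriv (deriv O) z - k * deriv O z := by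
    intro z hz
    obtain ⟨hI, hO⟩ := hN z hz
    have he := heq z
    have hIle : α * I z ≤ δ := by
      have := (mul_lt_mul_of_pos_left hI hα).le
      calc α * I z ≤ α * (δ / α) := this
        _ = δ := by field_simp
    have hmuOS : 0 ≤ μ * O z * S z := by
      have := hOpos z; have := hSpos z; positivity
    have hγO : γ * (b / 2) ≤ γ * O z := by nlinarith
    have hrhs : c * deriv O z - D₂ * deriv (deriv O) z ≤ -δ := by
      rw [he]; nlinarith
    rw [div_le_iff₀ hD₂]
    have hexp : (deriv (deriv O) z - k * deriv O z) * D₂ =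
        D₂ * deriv (deriv O) z - c * deriv O z := by rw [← hkD]; ring
    linarith
  -- the auxiliary function φ and its derivative
  set e : ℝ → ℝ := fun z => Real.exp (-(k * z)) with he_def
  have hepos : ∀ z, 0 < e z := fun z => Real.exp_pos _
  have hede : ∀ z, HasDerivAt e (-k * e z) z := by
    intro z
    have h1 : HasDerivAt (fun z : ℝ => -(k * z)) (-k) z := by
      exact (((hasDerivAt_id z).const_mul k).neg).congr_deriv (by ring)
    simpa [he_def, mul_comm, Function.comp_def] using (Real.hasDerivAt_exp (-(k * z))).comp z h1
  set φ : ℝ → ℝ := fun z => deriv O z * e z + (δ / c) * e z with hφ_def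
  have hφd : ∀ z, HasDerivAt φ
      ((deriv (deriv O) z - k * deriv O z - δ / D₂) * e z) z := by
    intro z
    have hd1 : HasDerivAt (fun z => deriv O z * e z)
        (deriv (deriv O) z * e z + deriv O z * (-k * e z)) z :=
      ((hO2 z).hasDerivAt).mul (hede z)
    have hd2 : HasDerivAt (fun z => (δ / c) * e z) ((δ / c) * (-k * e z)) z :=
      (hede z).const_mul _
    have hco : δ / c * k = δ / D₂ := by
      rw [hk_def]; field_simp
    refine (hd1.add hd2).congr_deriv ?_
    linear_combination (-(e z)) * hco
  have hφdiff : Differentiable ℝ φ := fun z => (hφd z).differentiableAt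
  -- φ is monotone on [N, ∞)
  have hmono : MonotoneOn φ (Set.Ici N) := by
    apply monotoneOn_of_deriv_nonneg (convex_Ici N) hφdiff.continuous.continuousOn
      (hφdiff.differentiableOn)
    intro x hx
    rw [interior_Ici] at hx
    rw [(hφd x).deriv]
    have := key x (le_of_lt hx)
    have := (hepos x).le
    nlinarith
  -- deduce deriv O z ≤ -(δ/c) for z ≥ N
  have hO'le : ∀ z, N ≤ z → deriv O z ≤ -(δ / c) := by
    intro z hz
    have hbound : ∀ w, z ≤ w → φ z ≤ (Cb + δ / c) * e w := by
      intro w hw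
      have h1 : φ z ≤ φ w := hmono hz (le_trans hz hw) hw
      have h2 : φ w ≤ (Cb + δ / c) * e w := by
        have hOw : deriv O w ≤ Cb := (abs_le.1 (hCb w)).2
        have := (hepos w).le
        simp only [hφ_def]
        nlinarith
      exact h1.trans h2
    have htend : Tendsto (fun w => (Cb + δ / c) * e w) atTop (nhds 0) := by
      have h1 : Tendsto (fun w : ℝ => -(k * w)) atTop atBot := by
        apply tendsto_neg_atTop_atBot.comp
        exact Tendsto.const_mul_atTop hk tendsto_id
      have h2 : Tendsto e atTop (nhds 0) := Real.tendsto_exp_atBot.comp h1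
      simpa using h2.const_mul (Cb + δ / c)
    have hφz : φ z ≤ 0 := ge_of_tendsto htend (eventually_atTop.2 ⟨z, hbound⟩)
    have hez := hepos z
    simp only [hφ_def] at hφz
    nlinarith
  -- now O decreases linearly, contradiction with O ≥ 0
  set ψ : ℝ → ℝ := fun z => O z + (δ / c) * z with hψ_def
  have hψd : ∀ z, HasDerivAt ψ (deriv O z + δ / c) z := by
    intro z
    have h1 : HasDerivAt (fun z : ℝ => (δ / c) * z) (δ / c) z := by
      simpa using (hasDerivAt_id z).const_mul (δ / c)
    exact ((hO1 z).hasDerivAt).add h1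
  have hanti : AntitoneOn ψ (Set.Ici N) := by
    apply antitoneOn_of_deriv_nonpos (convex_Ici N)
      (Differentiable.continuous (fun z => (hψd z).differentiableAt)).continuousOn
      (fun x _ => ((hψd x).differentiableAt).differentiableWithinAt)
    intro x hx
    rw [interior_Ici] at hx
    rw [(hψd x).deriv]
    have := hO'le x (le_of_lt hx)
    linarith
  set r := δ / c with hr_def
  have hr : 0 < r := by positivity
  set W := N + (O N + 1) / r with hW_def
  have hWN : N ≤ W := by
    have h : 0 < (O N + 1) / r := by
      have := hOpos N; positivity
    rw [hW_def]; linarith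
  have hψW : ψ W ≤ ψ N := hanti (Set.self_mem_Ici) hWN hWN
  have hrW : r * W = r * N + (O N + 1) := by
    rw [hW_def]; field_simp
  have hOW : O W ≤ -1 := by
    simp only [hψ_def, ← hr_def] at hψW
    nlinarith
  have := hOpos W
  linarith
end
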